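/- arXiv:1912.06919 — 4 statements merged into one kernel-verified Lean document; each statement's English description precedes it below -/
import Mathlib

section
/- For any integers p ≥ 1 and q ≥ 0, if u is the unique element in the interval [p, p+q] maximizing the 2-adic valuation v₂(u), then v₂(∑_{i=0}^{q} C(q,i)/(p+i)) = v₂(C(q, u-p)/u), where the sum is taken in ℚ and v₂ denotes the 2-adic valuation on ℚ. -/
/-!
Multiplying the sum by `p * C(p+q, p) = (p+q)! / ((p-1)! q!)` turns it into the integer
`T = ∑ᵢ C(p-1+i, i) C(p+q, q-i)`. Up to the signs `(-1)^i`, which are invisible mod 2, `T` is the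
Chu–Vandermonde expansion of `C(q, q) = 1` with upper indices `-p` and `p + q`, so `T` is odd.
Rearranging factorials, the sum equals `T * (C(q, u-p) / u) / (C(p+q, u) * C(u-1, p-1))`, and both
binomial coefficients in the denominator are odd by Lucas' theorem: `2^v₂(u)` divides `u` and
exceeds `u - p` and `p + q - u`, for otherwise `u ∓ 2^v₂(u)` would be a second point of the
interval of valuation at least `v₂(u)`.
-/

open Finset
open scoped Nat

theorem choose_modEq_choose_mod_pow_mul_choose_div_pow {p : ℕ} [Fact p.Prime] (a n k : ℕ) :
    n.choose k ≡ (n % p ^ a).choose (k % p ^ a) * (n / p ^ a).choose (k / p ^ a) [MOD p] := by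
  induction a generalizing n k with
  | zero => simp only [pow_zero, Nat.mod_one, Nat.div_one, Nat.choose_self, one_mul]; rfl
  | succ a ih =>
    have hlow := Choose.choose_modEq_choose_mod_mul_choose_div_nat
      (n := n % (p * p ^ a)) (k := k % (p * p ^ a)) (p := p)
    simp only [Nat.mod_mul_right_mod, Nat.mod_mul_right_div_self] at hlow
    rw [_root_.pow_succ', ← Nat.div_div_eq_div_mul, ← Nat.div_div_eq_div_mul]
    calc n.choose k ≡ (n % p).choose (k % p) * (n / p).choose (k / p) [MOD p] :=
          Choose.choose_modEq_choose_mod_mul_choose_div_nat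
      _ ≡ (n % p).choose (k % p) * ((n / p % p ^ a).choose (k / p % p ^ a) *
            (n / p / p ^ a).choose (k / p / p ^ a)) [MOD p] := (ih _ _).mul_left _
      _ = (n % p).choose (k % p) * (n / p % p ^ a).choose (k / p % p ^ a) *
            (n / p / p ^ a).choose (k / p / p ^ a) := by ring
      _ ≡ _ [MOD p] := hlow.symm.mul_right _

theorem choose_add_modEq_one_of_pow_dvd {p a m r : ℕ} [Fact p.Prime] (hm : p ^ a ∣ m)
    (hr : r < p ^ a) : (m + r).choose m ≡ 1 [MOD p] := by
  have hp : 0 < p ^ a := Nat.pos_of_ne_zero (pow_ne_zero _ (Fact.out : p.Prime).ne_zero)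
  obtain ⟨c, rfl⟩ := hm
  have h := choose_modEq_choose_mod_pow_mul_choose_div_pow (p := p) a (p ^ a * c + r) (p ^ a * c)
  rwa [Nat.mul_add_mod, Nat.mod_eq_of_lt hr, Nat.mul_mod_right, Nat.mul_add_div hp,
    Nat.div_eq_of_lt hr, Nat.mul_div_cancel_left _ hp, Nat.choose_zero_right, add_zero,
    Nat.choose_self, mul_one] at h

theorem choose_sub_one_modEq_choose_pow_sub_one {p a m k : ℕ} [Fact p.Prime] (hm : p ^ a ∣ m)
    (hm0 : 0 < m) (hk : k < p ^ a) : (m - 1).choose k ≡ (p ^ a - 1).choose k [MOD p] := by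
  have hp : 0 < p ^ a := Nat.pos_of_ne_zero (pow_ne_zero _ (Fact.out : p.Prime).ne_zero)
  obtain ⟨c, rfl⟩ := hm
  obtain ⟨c, rfl⟩ : ∃ c', c = c' + 1 := ⟨c - 1, by have := Nat.pos_of_mul_pos_left hm0; omega⟩
  have h := choose_modEq_choose_mod_pow_mul_choose_div_pow (p := p) a (p ^ a * (c + 1) - 1) k
  have hsplit : p ^ a * (c + 1) - 1 = p ^ a * c + (p ^ a - 1) := by rw [mul_add_one]; omega
  rw [hsplit] at h ⊢
  rwa [Nat.mul_add_mod, Nat.mod_eq_of_lt (by omega), Nat.mod_eq_of_lt hk,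
    Nat.mul_add_div hp, Nat.div_eq_of_lt (by omega), Nat.div_eq_of_lt hk, add_zero,
    Nat.choose_zero_right, mul_one] at h

theorem odd_choose_two_pow_sub_one {a k : ℕ} (hk : k < 2 ^ a) : Odd ((2 ^ a - 1).choose k) := by
  induction a generalizing k with
  | zero => simp_all
  | succ a ih =>
    have h := Choose.choose_modEq_choose_mod_mul_choose_div_nat (n := 2 ^ (a + 1) - 1) (k := k)
      (p := 2)
    have hmod : (2 ^ (a + 1) - 1) % 2 = 1 := by rw [pow_succ]; omega
    have hdiv : (2 ^ (a + 1) - 1) / 2 = 2 ^ a - 1 := by rw [pow_succ]; omega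
    have hbit : (1).choose (k % 2) = 1 := by
      rcases Nat.mod_two_eq_zero_or_one k with h | h <;> simp [h]
    rw [hmod, hdiv, hbit, one_mul] at h
    rw [Nat.odd_iff, h, ← Nat.odd_iff]
    exact ih (by rw [pow_succ] at hk; omega)

-- The integer `T` of the header, with `t = p - 1`.
def chooseConvolution (t q : ℕ) : ℕ :=
  ∑ i ∈ range (q + 1), (t + i).choose i * (t + 1 + q).choose (q - i)

theorem sum_neg_one_pow_mul_choose_mul_choose (t q : ℕ) :
    ∑ i ∈ range (q + 1), (-1 : ℤ) ^ i * ((t + i).choose i * (t + 1 + q).choose (q - i)) = 1 := by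
  have h := Ring.add_choose_eq (r := -((t + 1 : ℕ) : ℤ)) (s := ((t + 1 + q : ℕ) : ℤ)) q
    (Commute.all _ _)
  rw [show -((t + 1 : ℕ) : ℤ) + ((t + 1 + q : ℕ) : ℤ) = (q : ℤ) by push_cast; ring,
    Ring.choose_natCast, Nat.choose_self, Nat.cast_one, Nat.sum_antidiagonal_eq_sum_range_succ
      (fun i j => Ring.choose (-((t + 1 : ℕ) : ℤ)) i * Ring.choose ((t + 1 + q : ℕ) : ℤ) j)] at h
  refine Eq.trans (sum_congr rfl fun i _ => ?_) h.symm
  rw [Ring.choose_neg, Ring.choose_natCast,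
    show ((t + 1 : ℕ) : ℤ) + i - 1 = ((t + i : ℕ) : ℤ) by push_cast; ring, Ring.choose_natCast,
    Units.smul_def, smul_eq_mul, Int.coe_negOnePow_natCast]
  ring

theorem odd_chooseConvolution (t q : ℕ) : Odd (chooseConvolution t q) := by
  rw [← ZMod.natCast_eq_one_iff_odd]
  have h := congrArg (Int.cast : ℤ → ZMod 2) (sum_neg_one_pow_mul_choose_mul_choose t q)
  push_cast at h
  simpa [chooseConvolution, show (-1 : ZMod 2) = 1 from rfl] using h

theorem sum_choose_div_eq_chooseConvolution_mul (t q : ℕ) :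
    ∑ i ∈ range (q + 1), (q.choose i : ℚ) / ((t + 1 : ℕ) + i) =
      chooseConvolution t q * (t ! * q ! / (t + 1 + q)!) := by
  rw [chooseConvolution, Nat.cast_sum, sum_mul]
  refine sum_congr rfl fun i hi => ?_
  obtain ⟨j, rfl⟩ := Nat.exists_eq_add_of_le (Nat.lt_succ_iff.mp (mem_range.mp hi))
  rw [Nat.add_sub_cancel_left, Nat.cast_mul, Nat.cast_choose ℚ (Nat.le_add_right i j),
    Nat.cast_choose ℚ (Nat.le_add_left i t), Nat.cast_choose ℚ (by omega : j ≤ t + 1 + (i + j)),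
    Nat.add_sub_cancel_left, Nat.add_sub_cancel, show t + 1 + (i + j) - j = t + i + 1 by omega,
    Nat.factorial_succ (t + i)]
  push_cast
  field_simp
  ring

theorem factorial_mul_factorial_div_factorial_eq (t d e : ℕ) :
    (t ! * (d + e)! / (t + 1 + (d + e))! : ℚ) =
      (d + e).choose d / (t + 1 + d : ℕ) /
        ((t + 1 + (d + e)).choose (t + 1 + d) * (t + d).choose t : ℕ) := by
  rw [Nat.cast_mul, Nat.cast_choose ℚ (Nat.le_add_right d e),
    Nat.cast_choose ℚ (by omega : t + 1 + d ≤ t + 1 + (d + e)),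
    Nat.cast_choose ℚ (Nat.le_add_right t d), Nat.add_sub_cancel_left, Nat.add_sub_cancel_left,
    show t + 1 + (d + e) - (t + 1 + d) = e by omega,
    show t + 1 + d = (t + d) + 1 by omega, Nat.factorial_succ (t + d)]
  push_cast
  field_simp

theorem sub_lt_pow_padicValNat_of_forall_lt {ℓ p q u : ℕ} [Fact ℓ.Prime] (hp : 0 < p)
    (hu : u ∈ Icc p (p + q))
    (hmax : ∀ c ∈ Icc p (p + q), c ≠ u → padicValNat ℓ c < padicValNat ℓ u) :
    u - p < ℓ ^ padicValNat ℓ u ∧ p + q - u < ℓ ^ padicValNat ℓ u := by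
  obtain ⟨hpu, huq⟩ := mem_Icc.mp hu
  have hdvd : ℓ ^ padicValNat ℓ u ∣ u := pow_padicValNat_dvd
  have hpos : 0 < ℓ ^ padicValNat ℓ u := Nat.pos_of_dvd_of_pos hdvd (by omega)
  have hle : ∀ c ∈ Icc p (p + q), ℓ ^ padicValNat ℓ u ∣ c → c = u := fun c hc hc_dvd => by
    by_contra hne
    have := (padicValNat_dvd_iff_le (by have := (mem_Icc.mp hc).1; omega)).mp hc_dvd
    exact absurd (hmax c hc hne) (by omega)
  constructor
  · by_contra! h
    have := hle (u - ℓ ^ padicValNat ℓ u) (mem_Icc.mpr ⟨by omega, by omega⟩)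
      (Nat.dvd_sub hdvd dvd_rfl)
    omega
  · by_contra! h
    have := hle (u + ℓ ^ padicValNat ℓ u) (mem_Icc.mpr ⟨by omega, by omega⟩)
      (Nat.dvd_add hdvd dvd_rfl)
    omega

theorem padicValRat_natCast_mul_div_natCast {ℓ m n : ℕ} [Fact ℓ.Prime] {x : ℚ}
    (hm : ¬ ℓ ∣ m) (hn : ¬ ℓ ∣ n) (hx : x ≠ 0) :
    padicValRat ℓ (m * x / n) = padicValRat ℓ x := by
  have hm0 : m ≠ 0 := by rintro rfl; exact hm (dvd_zero ℓ)
  have hn0 : n ≠ 0 := by rintro rfl; exact hn (dvd_zero ℓ)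
  rw [padicValRat.div (mul_ne_zero (by exact_mod_cast hm0) hx) (by exact_mod_cast hn0),
    padicValRat.mul (by exact_mod_cast hm0) hx, padicValRat.of_nat, padicValRat.of_nat,
    padicValNat.eq_zero_of_not_dvd hm, padicValNat.eq_zero_of_not_dvd hn]
  simp

/-- For integers `p ≥ 1`, `q ≥ 0`, if `u` is the unique element of
`[p, p+q]` maximizing the 2-adic valuation, then
`v₂(∑_{i=0}^q C(q,i)/(p+i)) = v₂(C(q, u-p)/u)`. -/
theorem stmt0 (p q u : ℕ) (hp : 1 ≤ p)
    (hu : u ∈ Finset.Icc p (p + q))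
    (hmax : ∀ c ∈ Finset.Icc p (p + q), c ≠ u → padicValNat 2 c < padicValNat 2 u) :
    padicValRat 2 (∑ i ∈ Finset.range (q + 1), (q.choose i : ℚ) / (p + i)) =
      padicValRat 2 ((q.choose (u - p) : ℚ) / u) := by
  obtain ⟨hd, he⟩ := sub_lt_pow_padicValNat_of_forall_lt hp hu hmax
  have hdvd : 2 ^ padicValNat 2 u ∣ u := pow_padicValNat_dvd
  obtain ⟨hpu, huq⟩ := mem_Icc.mp hu
  obtain ⟨t, rfl⟩ : ∃ t, p = t + 1 := ⟨p - 1, by omega⟩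
  obtain ⟨d, rfl⟩ : ∃ d, u = t + 1 + d := ⟨u - (t + 1), by omega⟩
  obtain ⟨e, rfl⟩ : ∃ e, q = d + e := ⟨q - d, by omega⟩
  have hodd₁ : Odd ((t + 1 + (d + e)).choose (t + 1 + d)) := by
    rw [Nat.odd_iff, show t + 1 + (d + e) = t + 1 + d + e by omega]
    exact choose_add_modEq_one_of_pow_dvd hdvd (by omega)
  have hodd₂ : Odd ((t + d).choose t) := by
    rw [Nat.choose_symm_add, Nat.odd_iff, show t + d = t + 1 + d - 1 by omega,
      choose_sub_one_modEq_choose_pow_sub_one hdvd (by omega) (by omega), ← Nat.odd_iff]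
    exact odd_choose_two_pow_sub_one (by omega)
  rw [Nat.add_sub_cancel_left, sum_choose_div_eq_chooseConvolution_mul,
    factorial_mul_factorial_div_factorial_eq, ← mul_div_assoc, padicValRat_natCast_mul_div_natCast]
  · exact Nat.two_dvd_ne_zero.mpr (Nat.odd_iff.mp (odd_chooseConvolution t (d + e)))
  · exact Nat.two_dvd_ne_zero.mpr (Nat.odd_iff.mp (hodd₁.mul hodd₂))
  · have := Nat.choose_pos (Nat.le_add_right d e)
    positivity
end

section
/- Let u be the unique element of maximal 2-adic valuation in [p, p+q] with k = v₂(u). Then for every c in [p, p+q], v₂(C(q, c-p)/c) ≥ v₂(C(q, u-p)/u), where C denotes binomial coefficients and v₂ is the 2-adic valuation on ℚ. -/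
/-!
Put `a = u - p`, `b = c - p` and `k = v₂(u)`. Uniqueness of `u` forces `q < 2 ^ (k + 1)`, and
`v₂(|u - c|) = v₂(c)` because `v₂(c) < k`. For `b < a`, the identity
`C(q, a) C(a, b) = C(q, b) C(q - b, a - b)` and Kummer's bound `v₂(C(n, y)) + v₂(y) ≤ k` for
`y ≤ n < 2 ^ (k + 1)` give `v₂(C(q, a)) + v₂(c) ≤ v₂(C(q, b)) + k`; the case `a < b` follows by
the symmetry `C(q, a) = C(q, q - a)`.
-/

namespace Nat

variable {p : ℕ} [Fact p.Prime]

theorem exists_dvd_mem_Icc {N : ℕ} (a q : ℕ) (hN : 0 < N) (hNq : N ≤ q + 1) :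
    ∃ m ∈ Finset.Icc a (a + q), N ∣ m := by
  refine ⟨(a + q) / N * N, Finset.mem_Icc.2 ⟨?_, Nat.div_mul_le_self _ _⟩, Nat.dvd_mul_left _ _⟩
  have := Nat.lt_div_mul_add (a := a + q) hN
  omega

/-- Otherwise the interval would contain a positive multiple of `p ^ (v_p(u) + 1)`. -/
theorem lt_pow_padicValNat_succ {a q u : ℕ} (ha : 1 ≤ a)
    (hmax : ∀ c ∈ Finset.Icc a (a + q), c ≠ u → padicValNat p c < padicValNat p u) :
    q < p ^ (padicValNat p u + 1) := by
  by_contra! hq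
  obtain ⟨m, hm, hdvd⟩ := exists_dvd_mem_Icc (N := p ^ (padicValNat p u + 1)) a q
    (pow_pos (Fact.out : p.Prime).pos _) (by omega)
  have hm0 : m ≠ 0 := by rw [Finset.mem_Icc] at hm; omega
  have hvm := (padicValNat_dvd_iff_le hm0).mp hdvd
  obtain rfl | hmu := eq_or_ne m u
  · omega
  · have := hmax m hm hmu
    omega

theorem padicValNat_sub_eq_left_of_lt {x y : ℕ} (hx : x ≠ 0)
    (hv : padicValNat p x < padicValNat p y) (hyx : y < x) :
    padicValNat p (x - y) = padicValNat p x := by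
  have hy : y ≠ 0 := by rintro rfl; simp at hv
  have := padicValRat.add_eq_of_lt (p := p) (q := x) (r := -y)
    (by rw [← sub_eq_add_neg, sub_ne_zero]; exact_mod_cast hyx.ne')
    (by exact_mod_cast hx) (by simpa using hy) (by simpa [padicValRat.neg] using hv)
  rwa [← sub_eq_add_neg, ← Nat.cast_sub hyx.le, padicValRat.of_nat, padicValRat.of_nat,
    Nat.cast_inj] at this

theorem padicValNat_sub_eq_right_of_lt {x y : ℕ} (hx : x ≠ 0)
    (hv : padicValNat p x < padicValNat p y) (hxy : x < y) :
    padicValNat p (y - x) = padicValNat p x := by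
  have hy : y ≠ 0 := by rintro rfl; simp at hv
  have := padicValRat.add_eq_of_lt (p := p) (q := -x) (r := y)
    (by rw [neg_add_eq_sub, sub_ne_zero]; exact_mod_cast hxy.ne')
    (by simpa using hx) (by exact_mod_cast hy) (by simpa [padicValRat.neg] using hv)
  rwa [neg_add_eq_sub, ← Nat.cast_sub hxy.le, padicValRat.neg, padicValRat.of_nat,
    padicValRat.of_nat, Nat.cast_inj] at this

/-- By Kummer's theorem, adding `y` and `n - y` in base `p` produces no carry below the lowest
nonzero digit of `y`, and none at or beyond position `k + 1`. -/
theorem padicValNat_choose_add_padicValNat_le {n y k : ℕ} (hy : y ≠ 0) (hyn : y ≤ n)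
    (hn : n < p ^ (k + 1)) :
    padicValNat p (n.choose y) + padicValNat p y ≤ k := by
  set t := padicValNat p y
  have hp := (Fact.out : p.Prime)
  have htk : t < k + 1 := by
    have hpt : p ^ t ≤ y := Nat.le_of_dvd (Nat.pos_of_ne_zero hy) pow_padicValNat_dvd
    exact (Nat.pow_lt_pow_iff_right hp.one_lt).mp (by omega)
  have hcarries : {i ∈ Finset.Ico 1 (k + 1) | p ^ i ≤ y % p ^ i + (n - y) % p ^ i}
      ⊆ Finset.Ico (t + 1) (k + 1) := by
    intro i hi
    simp only [Finset.mem_filter, Finset.mem_Ico] at hi ⊢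
    refine ⟨Nat.lt_of_not_le fun hit => ?_, hi.1.2⟩
    have hyi : y % p ^ i = 0 :=
      Nat.mod_eq_zero_of_dvd ((pow_dvd_pow p hit).trans pow_padicValNat_dvd)
    have := Nat.mod_lt (n - y) (pow_pos hp.pos i)
    omega
  have := Finset.card_le_card hcarries
  rw [Nat.card_Ico] at this
  rw [padicValNat_choose hyn (Nat.log_lt_of_lt_pow (by omega) hn)]
  omega

theorem padicValNat_choose_add_padicValNat_sub_le {q a b k : ℕ} (hq : q < p ^ (k + 1))
    (ha : a ≤ q) (hba : b < a) :
    padicValNat p (q.choose a) + padicValNat p (a - b) ≤ padicValNat p (q.choose b) + k := by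
  have hmul := congrArg (padicValNat p) (Nat.choose_mul (n := q) hba.le)
  rw [padicValNat.mul (Nat.choose_pos ha).ne' (Nat.choose_pos hba.le).ne',
    padicValNat.mul (Nat.choose_pos (by omega)).ne' (Nat.choose_pos (by omega)).ne'] at hmul
  have := padicValNat_choose_add_padicValNat_le (p := p) (n := q - b) (y := a - b) (k := k)
    (by omega) (by omega) (by omega)
  omega

theorem padicValNat_choose_add_padicValNat_sub_le' {q a b k : ℕ} (hq : q < p ^ (k + 1))
    (hb : b ≤ q) (hab : a < b) :
    padicValNat p (q.choose a) + padicValNat p (b - a) ≤ padicValNat p (q.choose b) + k := by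
  have := padicValNat_choose_add_padicValNat_sub_le (p := p) hq (Nat.sub_le q a)
    (show q - b < q - a by omega)
  rwa [Nat.choose_symm (by omega), Nat.choose_symm hb, show q - a - (q - b) = b - a by omega]
    at this

end Nat

theorem padicValRat_natCast_div {p m n : ℕ} [Fact p.Prime] (hm : m ≠ 0) (hn : n ≠ 0) :
    padicValRat p ((m : ℚ) / n) = padicValNat p m - padicValNat p n := by
  rw [padicValRat.div (by exact_mod_cast hm) (by exact_mod_cast hn), padicValRat.of_nat,
    padicValRat.of_nat]

/-- If `u` is the unique element of maximal 2-adic valuation in `[p, p+q]`,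
then for every `c` in `[p, p+q]`, `v₂(C(q, c-p)/c) ≥ v₂(C(q, u-p)/u)`. -/
theorem stmt2 (p q u : ℕ) (hp : 1 ≤ p)
    (hu : u ∈ Finset.Icc p (p + q))
    (hmax : ∀ c ∈ Finset.Icc p (p + q), c ≠ u → padicValNat 2 c < padicValNat 2 u) :
    ∀ c ∈ Finset.Icc p (p + q),
      padicValRat 2 ((q.choose (u - p) : ℚ) / u) ≤
        padicValRat 2 ((q.choose (c - p) : ℚ) / c) := by
  intro c hc
  obtain rfl | hcu := eq_or_ne c u
  · exact le_rfl
  have hvc := hmax c hc hcu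
  have hq := Nat.lt_pow_padicValNat_succ hp hmax
  rw [Finset.mem_Icc] at hu hc
  have key : padicValNat 2 (q.choose (u - p)) + padicValNat 2 c ≤
      padicValNat 2 (q.choose (c - p)) + padicValNat 2 u := by
    rcases hcu.lt_or_gt with hcu | huc
    · have := Nat.padicValNat_choose_add_padicValNat_sub_le hq (a := u - p) (b := c - p)
        (by omega) (by omega)
      rwa [show u - p - (c - p) = u - c by omega,
        Nat.padicValNat_sub_eq_right_of_lt (by omega) hvc hcu] at this
    · have := Nat.padicValNat_choose_add_padicValNat_sub_le' hq (a := u - p) (b := c - p)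
        (by omega) (by omega)
      rwa [show c - p - (u - p) = c - u by omega,
        Nat.padicValNat_sub_eq_left_of_lt (by omega) hvc huc] at this
  rw [padicValRat_natCast_div (Nat.choose_pos (by omega)).ne' (by omega),
    padicValRat_natCast_div (Nat.choose_pos (by omega)).ne' (by omega)]
  omega
end

section
/- Let M be a generating list of nonzero vectors v₁,...,v_n of 𝔽₂^r with ∑_{i=1}^n v_i ≠ 0 in 𝔽₂^r (the generic condition). Then the 𝔽₂-vector space (ℤ/2ℤ)[x₁,...,x_r]/(x₁²−1, ..., x_r²−1, n − ∑_{i=1}^n ∏_j x_j^{(v_i)_j}) has dimension 2^{r−1} over 𝔽₂. -/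
/-!
Modulo the relations `xⱼ² = 1` the polynomial ring becomes the group algebra `𝔽₂[G]` of
`G = 𝔽₂^r`, and the last relation becomes `L = n - ∑ᵢ [vᵢ]`. By Frobenius
`L² = n² - ∑ᵢ [2vᵢ] = n - n = 0`, so the image of multiplication by `L` lies in its kernel and
`dim 𝔽₂[G]/(L) ≥ |G|/2`.

Conversely, choose a functional `f` with `f e = 1` for `e = ∑ᵢ vᵢ` and put `H = ker f`. Then
`L = C - [e] F` with `C, F ∈ 𝔽₂[H]` and `F² = #{i | f vᵢ = 1} = f e = 1`, so `[e] = C F` modulo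
`L`. As `G = H ∪ (e + H)`, the algebra `𝔽₂[H]` maps onto `𝔽₂[G]/(L)`, whence
`dim 𝔽₂[G]/(L) ≤ |H| = |G|/2`.
-/

section

open AddMonoidAlgebra Module Finset

lemma pow_val_add_of_pow_eq_one {M : Type*} [Monoid M] {n : ℕ} [NeZero n] {x : M}
    (hx : x ^ n = 1) (a b : ZMod n) : x ^ (a + b).val = x ^ a.val * x ^ b.val := by
  rw [ZMod.val_add, ← pow_eq_pow_mod _ hx, pow_add]

lemma ZMod.sum_eq_card_filter_eq_one {ι : Type*} (s : Finset ι) (x : ι → ZMod 2) :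
    ∑ i ∈ s, x i = #{i ∈ s | x i = 1} := by
  rw [natCast_card_filter]
  refine sum_congr rfl fun i _ => ?_
  generalize x i = a
  fin_cases a <;> rfl

section AlgebraZModTwo

variable {A : Type*} [CommRing A] [Algebra (ZMod 2) A]

lemma natCast_sq_of_algebra_zmod_two (n : ℕ) : (n : A) ^ 2 = n := by
  rw [← map_natCast (algebraMap (ZMod 2) A), ← map_pow, ZMod.pow_card]

lemma natCast_eq_one_of_odd_of_algebra_zmod_two {n : ℕ} (hn : Odd n) : (n : A) = 1 := by
  rw [← map_natCast (algebraMap (ZMod 2) A), ZMod.natCast_eq_one_iff_odd.mpr hn, map_one]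

end AlgebraZModTwo

lemma finrank_le_two_mul_finrank_quotient_of_mul_self_eq_zero {K R : Type*} [Field K]
    [CommRing R] [Algebra K R] [FiniteDimensional K R] {f : R} (hf : f * f = 0) :
    finrank K R ≤ 2 * finrank K (R ⧸ Ideal.span {f}) := by
  let L := LinearMap.mulLeft K f
  have hrange : LinearMap.range L = (Ideal.span {f}).restrictScalars K := by
    ext x
    simp [L, Ideal.mem_span_singleton', mul_comm]
  have hle : LinearMap.range L ≤ LinearMap.ker L := by
    rintro _ ⟨y, rfl⟩
    simp [L, ← mul_assoc, hf]
  have := Submodule.finrank_mono hle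
  have := L.finrank_range_add_finrank_ker
  have := ((Ideal.span {f}).restrictScalars K).finrank_quotient_add_finrank
  rw [(Submodule.Quotient.restrictScalarsEquiv K (Ideal.span {f})).finrank_eq, ← hrange] at this
  omega

instance AddMonoidAlgebra.charP {K G : Type*} [CommRing K] [AddMonoid G] (p : ℕ) [CharP K p] :
    CharP K[G] p :=
  charP_of_injective_algebraMap' K p

lemma AddMonoidAlgebra.finrank_eq_card (K G : Type*) [Field K] [AddMonoid G] [Finite G] :
    finrank K K[G] = Nat.card G := by
  have := Fintype.ofFinite G
  rw [(coeffLinearEquiv K).finrank_eq, finrank_finsupp_self, Nat.card_eq_fintype_card]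

lemma AddMonoidAlgebra.mk_comp_mapDomain_surjective {K G : Type*} [CommRing K] [AddCommGroup G]
    {H : AddSubgroup G} {e : G} (he : ∀ g ∉ H, g - e ∈ H) {I : Ideal K[G]}
    (ht : Ideal.Quotient.mk I (single e 1) ∈
      ((Ideal.Quotient.mkₐ K I).comp (mapDomainAlgHom K K H.subtype)).range) :
    Function.Surjective ((Ideal.Quotient.mkₐ K I).comp (mapDomainAlgHom K K H.subtype)) := by
  set π := (Ideal.Quotient.mkₐ K I).comp (mapDomainAlgHom K K H.subtype)
  have hH : ∀ h (hh : h ∈ H) (c : K), Ideal.Quotient.mk I (single h c) ∈ π.range :=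
    fun h hh c => ⟨single ⟨h, hh⟩ c, by simp [π]⟩
  rw [← AlgHom.range_eq_top, eq_top_iff]
  rintro x -
  obtain ⟨x, rfl⟩ := Ideal.Quotient.mk_surjective x
  induction x using induction_linear with
  | zero => simp
  | add x y hx hy => rw [map_add]; exact add_mem hx hy
  | single g c =>
    by_cases hg : g ∈ H
    · exact hH g hg c
    · rw [show single g c = single e 1 * single (g - e) c by simp [single_mul_single], map_mul]
      exact mul_mem ht (hH _ (he g hg) c)

section ElementaryAbelian

variable {G ι : Type*} [AddCommGroup G] [Module (ZMod 2) G]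

lemma AddMonoidAlgebra.single_sq_eq_one {K : Type*} [CommSemiring K] (g : G) :
    (single g 1 : K[G]) ^ 2 = 1 := by
  rw [single_pow, one_pow, ZModModule.char_nsmul_eq_zero, one_def]

lemma sq_sum_single_eq_card (s : Finset ι) (v : ι → G) :
    (∑ i ∈ s, single (v i) (1 : ZMod 2)) ^ 2 = (#s : (ZMod 2)[G]) := by
  simp only [sum_pow_char, single_sq_eq_one, sum_const, nsmul_one]

lemma Module.Dual.card_ker_mul_two {f : Dual (ZMod 2) G} (hf : f ≠ 0) :
    Nat.card (LinearMap.ker f) * 2 = Nat.card G := by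
  have h := f.toAddMonoidHom.ker.card_mul_index
  rwa [AddSubgroup.index_ker, AddMonoidHom.range_eq_top.mpr (LinearMap.surjective hf),
    AddSubgroup.card_top, Nat.card_zmod] at h

variable [Fintype ι]

/-- Multiplication by this element is the Laplacian of the Cayley graph of `G` with respect to
the family of connections `v`. -/
noncomputable def cayleyLaplacian (v : ι → G) : (ZMod 2)[G] :=
  (Fintype.card ι : (ZMod 2)[G]) - ∑ i, single (v i) 1

lemma cayleyLaplacian_mul_self (v : ι → G) : cayleyLaplacian v * cayleyLaplacian v = 0 := by
  rw [← sq, cayleyLaplacian, sub_pow_char, sq_sum_single_eq_card, natCast_sq_of_algebra_zmod_two,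
    card_univ, sub_self]

lemma exists_cayleyLaplacian_eq_sub_single_mul {v : ι → G} {f : Dual (ZMod 2) G}
    (hf : f (∑ i, v i) = 1) :
    ∃ C ∈ (mapDomainAlgHom (ZMod 2) (ZMod 2) (LinearMap.ker f).toAddSubgroup.subtype).range,
    ∃ F ∈ (mapDomainAlgHom (ZMod 2) (ZMod 2) (LinearMap.ker f).toAddSubgroup.subtype).range,
      F ^ 2 = 1 ∧ cayleyLaplacian v = C - single (∑ i, v i) 1 * F := by
  set e := ∑ i, v i
  have hsingle : ∀ g, f g = 0 → single g (1 : ZMod 2) ∈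
      (mapDomainAlgHom (ZMod 2) (ZMod 2) (LinearMap.ker f).toAddSubgroup.subtype).range :=
    fun g hg => ⟨single ⟨g, hg⟩ 1, by simp⟩
  set T : Finset ι := {i | f (v i) = 1}
  have hT : Odd #T := by
    rwa [map_sum, ZMod.sum_eq_card_filter_eq_one, ZMod.natCast_eq_one_iff_odd] at hf
  refine ⟨(Fintype.card ι : (ZMod 2)[G]) - ∑ i with ¬ f (v i) = 1, single (v i) 1, ?_,
    ∑ i ∈ T, single (v i + e) 1, ?_, ?_, ?_⟩
  · refine sub_mem (natCast_mem _ _) (sum_mem fun i hi => hsingle _ ?_)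
    simp only [mem_filter, mem_univ, true_and] at hi
    exact (by decide : ∀ a : ZMod 2, a ≠ 1 → a = 0) _ hi
  · refine sum_mem fun i hi => hsingle _ ?_
    simp only [T, mem_filter, mem_univ, true_and] at hi
    rw [map_add, hi, hf, ZModModule.add_self]
  · rw [sq_sum_single_eq_card, natCast_eq_one_of_odd_of_algebra_zmod_two hT]
  · have : single e 1 * ∑ i ∈ T, single (v i + e) 1 = ∑ i ∈ T, single (v i) (1 : ZMod 2) := by
      simp only [mul_sum, single_mul_single, one_mul, add_left_comm e, ZModModule.add_self,
        add_zero]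
    rw [this, cayleyLaplacian, ← sum_filter_add_sum_filter_not univ (fun i => f (v i) = 1)]
    ring

lemma two_mul_finrank_quotient_cayleyLaplacian_le [Finite G] {v : ι → G} (hv : ∑ i, v i ≠ 0) :
    2 * finrank (ZMod 2) ((ZMod 2)[G] ⧸ Ideal.span {cayleyLaplacian v}) ≤ Nat.card G := by
  obtain ⟨f, hf⟩ := Projective.exists_dual_eq_one (ZMod 2) hv
  set H := (LinearMap.ker f).toAddSubgroup
  set φ := mapDomainAlgHom (ZMod 2) (ZMod 2) H.subtype
  obtain ⟨C, ⟨C', hC'⟩, F, ⟨F', hF'⟩, hF, hdecomp⟩ := exists_cayleyLaplacian_eq_sub_single_mul hf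
  set I := Ideal.span {cayleyLaplacian v}
  replace hC' : φ C' = C := hC'
  replace hF' : φ F' = F := hF'
  have he : Ideal.Quotient.mk I (single (∑ i, v i) 1) = Ideal.Quotient.mk I (φ (C' * F')) := by
    have : Ideal.Quotient.mk I (cayleyLaplacian v) = 0 :=
      Ideal.Quotient.eq_zero_iff_mem.mpr (Ideal.mem_span_singleton_self _)
    rw [hdecomp, map_sub, sub_eq_zero, map_mul] at this
    rw [map_mul, map_mul, hC', hF', this, mul_assoc, ← map_mul, ← sq, hF, map_one, mul_one]
  have hcoset : ∀ g ∉ H, g - ∑ i, v i ∈ H := fun g hg => by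
    simp only [H, Submodule.mem_toAddSubgroup, LinearMap.mem_ker, map_sub, hf] at hg ⊢
    generalize f g = a at hg ⊢
    revert a
    decide
  have hsurj := mk_comp_mapDomain_surjective hcoset (I := I) ⟨C' * F', he.symm⟩
  calc 2 * finrank (ZMod 2) ((ZMod 2)[G] ⧸ I) ≤ 2 * finrank (ZMod 2) (ZMod 2)[H] :=
        Nat.mul_le_mul_left 2 <| LinearMap.finrank_le_finrank_of_surjective
          (f := ((Ideal.Quotient.mkₐ (ZMod 2) I).comp φ).toLinearMap) hsurj
    _ = Nat.card G := by
        rw [finrank_eq_card, mul_comm]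
        exact f.card_ker_mul_two (by rintro rfl; simp at hf)

theorem two_mul_finrank_quotient_cayleyLaplacian [Finite G] {v : ι → G} (hv : ∑ i, v i ≠ 0) :
    2 * finrank (ZMod 2) ((ZMod 2)[G] ⧸ Ideal.span {cayleyLaplacian v}) = Nat.card G :=
  (two_mul_finrank_quotient_cayleyLaplacian_le hv).antisymm <| by
    rw [← finrank_eq_card (ZMod 2) G]
    exact finrank_le_two_mul_finrank_quotient_of_mul_self_eq_zero (cayleyLaplacian_mul_self v)

end ElementaryAbelian

end

namespace MvPolynomial

open AddMonoidAlgebra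

variable (σ K : Type*) [CommRing K] [DecidableEq σ]

noncomputable def toGroupAlgebra : MvPolynomial σ K →ₐ[K] K[σ → ZMod 2] :=
  aeval fun j => single (Pi.single j 1) 1

variable {σ K}

lemma toGroupAlgebra_X (j : σ) : toGroupAlgebra σ K (X j) = single (Pi.single j 1) 1 :=
  aeval_X _ _

lemma toGroupAlgebra_prod_X_pow_val [Fintype σ] (g : σ → ZMod 2) :
    toGroupAlgebra σ K (∏ j, X j ^ (g j).val) = single g 1 := by
  simp only [map_prod, map_pow, toGroupAlgebra_X, single_pow, one_pow, prod_single,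
    Finset.prod_const_one]
  congr 1
  conv_rhs => rw [← Finset.univ_sum_single g]
  refine Finset.sum_congr rfl fun j _ => ?_
  rw [← Pi.single_smul, nsmul_one, ZMod.natCast_zmod_val]

variable (σ K) in
noncomputable def quotientSpanSqSubOneEquiv [Fintype σ] :
    (MvPolynomial σ K ⧸ Ideal.span (Set.range fun j => (X j : MvPolynomial σ K) ^ 2 - 1)) ≃ₐ[K]
      K[σ → ZMod 2] := by
  set I := Ideal.span (Set.range fun j => (X j : MvPolynomial σ K) ^ 2 - 1)
  have hI : ∀ p ∈ I, toGroupAlgebra σ K p = 0 := Ideal.span_le (I := RingHom.ker _) |>.mpr <| by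
    rintro _ ⟨j, rfl⟩
    rw [SetLike.mem_coe, RingHom.mem_ker, map_sub, map_pow, map_one, toGroupAlgebra_X,
      single_sq_eq_one, sub_self]
  let x : σ → MvPolynomial σ K ⧸ I := fun j => Ideal.Quotient.mk I (X j)
  have hx : ∀ j, x j ^ 2 = 1 := fun j => by
    rw [← sub_eq_zero, ← map_pow, ← map_one (Ideal.Quotient.mk I), ← map_sub,
      Ideal.Quotient.eq_zero_iff_mem]
    exact Ideal.subset_span ⟨j, rfl⟩
  let χ : Multiplicative (σ → ZMod 2) →* MvPolynomial σ K ⧸ I :=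
    { toFun g := ∏ j, x j ^ (g.toAdd j).val
      map_one' := by simp
      map_mul' a b := by
        simp only [toAdd_mul, Pi.add_apply, pow_val_add_of_pow_eq_one (hx _),
          Finset.prod_mul_distrib] }
  refine AlgEquiv.ofAlgHom (Ideal.Quotient.liftₐ I (toGroupAlgebra σ K) hI) (lift K _ _ χ) ?_ ?_
  · refine AddMonoidAlgebra.algHom_ext (fun g => ?_) (Subsingleton.elim _ _)
    simp only [AlgHom.comp_apply, lift_single, one_smul, MonoidHom.coe_mk, OneHom.coe_mk,
      toAdd_ofAdd, χ, x, ← map_pow, ← map_prod]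
    exact toGroupAlgebra_prod_X_pow_val g
  · refine Ideal.Quotient.algHom_ext K (MvPolynomial.algHom_ext fun j => ?_)
    rw [AlgHom.comp_assoc, Ideal.Quotient.liftₐ_comp, AlgHom.comp_apply, toGroupAlgebra_X,
      lift_single, one_smul]
    refine (Finset.prod_eq_single j (fun k _ hk => ?_) (by simp)).trans ?_
    · rw [toAdd_ofAdd, Pi.single_eq_of_ne hk, ZMod.val_zero, pow_zero]
    · rw [toAdd_ofAdd, Pi.single_eq_same, ZMod.val_one, pow_one]
      rfl

variable (K) in
noncomputable def quotientSpanSqSubOneUnionEquiv [Fintype σ] (f : MvPolynomial σ K) :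
    (MvPolynomial σ K ⧸ Ideal.span (Set.range (fun j => (X j : MvPolynomial σ K) ^ 2 - 1) ∪ {f}))
      ≃ₐ[K] K[σ → ZMod 2] ⧸ Ideal.span {toGroupAlgebra σ K f} :=
  (Ideal.quotientEquivAlgOfEq K (Ideal.span_union _ _)).trans <|
    (DoubleQuot.quotQuotEquivQuotSupₐ K _ _).symm.trans <|
      Ideal.quotientEquivAlg _ _ (quotientSpanSqSubOneEquiv σ K) <| by
        rw [Ideal.map_span, Ideal.map_span, Set.image_singleton, Set.image_singleton]
        rfl

end MvPolynomial

open MvPolynomial in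
theorem stmt13_general (r n : ℕ) (M : Fin n → Fin r → ZMod 2)
    (hgeneric : ∑ i, M i ≠ 0) :
    Module.finrank (ZMod 2)
      (MvPolynomial (Fin r) (ZMod 2) ⧸
        Ideal.span ((Set.range fun j : Fin r =>
            (X j : MvPolynomial (Fin r) (ZMod 2)) ^ 2 - 1) ∪
          {(n : MvPolynomial (Fin r) (ZMod 2)) - ∑ i, ∏ j, X j ^ (M i j).val})) =
      2 ^ (r - 1) := by
  have hL : toGroupAlgebra (Fin r) (ZMod 2)
      ((n : MvPolynomial (Fin r) (ZMod 2)) - ∑ i, ∏ j, X j ^ (M i j).val) = cayleyLaplacian M := by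
    simp only [map_sub, map_natCast, map_sum, toGroupAlgebra_prod_X_pow_val, cayleyLaplacian,
      Fintype.card_fin]
  have h := two_mul_finrank_quotient_cayleyLaplacian hgeneric
  rw [← hL, ← (quotientSpanSqSubOneUnionEquiv (ZMod 2) _).toLinearEquiv.finrank_eq, Nat.card_fun,
    Nat.card_zmod, Nat.card_eq_fintype_card, Fintype.card_fin] at h
  obtain ⟨k, rfl⟩ : ∃ k, r = k + 1 :=
    Nat.exists_eq_succ_of_ne_zero <| by rintro rfl; exact hgeneric (Subsingleton.elim _ _)
  rw [pow_succ] at h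
  rw [Nat.add_sub_cancel]
  omega

open MvPolynomial in
/-- For a generic generating list `M = (v₁,…,v_n)` of nonzero vectors of
`𝔽₂^r` (i.e. `∑ v_i ≠ 0`), the `𝔽₂`-algebra
`𝔽₂[x₁,…,x_r]/(x₁²-1,…,x_r²-1, n - ∑_i ∏_j x_j^{(v_i)_j})` has dimension `2^(r-1)`. -/
theorem stmt13 (r n : ℕ) (M : Fin n → Fin r → ZMod 2)
    (hnz : ∀ i, M i ≠ 0)
    (hgen : Submodule.span (ZMod 2) (Set.range M) = ⊤)
    (hgeneric : ∑ i, M i ≠ 0) :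
    Module.finrank (ZMod 2)
      (MvPolynomial (Fin r) (ZMod 2) ⧸
        Ideal.span ((Set.range fun j : Fin r =>
            (X j : MvPolynomial (Fin r) (ZMod 2)) ^ 2 - 1) ∪
          {(n : MvPolynomial (Fin r) (ZMod 2)) - ∑ i, ∏ j, X j ^ (M i j).val})) =
      2 ^ (r - 1) :=
  stmt13_general r n M hgeneric
end

section
/- Let M be a generating list of nonzero vectors of 𝔽₂³ such that the number of vectors with odd multiplicity is exactly 1, or exactly 2, or exactly 3 with the three odd-multiplicity vectors linearly independent. Then exactly 4 of the 7 nonzero Laplacian eigenvalues λ_u = 2·#{i : u·v_i = 1} (u ∈ 𝔽₂³ \ {0}) are congruent to 2 mod 4, and the other 3 are divisible by 4. -/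
/-!
Modulo 2, `λ_u / 2 = #{i | u ⬝ᵥ v i = 1}` equals `u ⬝ᵥ s` for `s = ∑ i, v i`, and in characteristic
two `s` is the sum of the vectors of odd multiplicity. In each of the three cases that sum is
nonzero, so `u ↦ u ⬝ᵥ s` is a nonzero functional on `𝔽₂³`: it is `1` on half of the space (4
vectors) and vanishes on the other 3 nonzero ones.
-/

open Finset

section CharTwoModule

variable {V : Type*} [AddCommGroup V] [Module (ZMod 2) V]

lemma nsmul_eq_ite_odd (n : ℕ) (v : V) : n • v = if Odd n then v else 0 := by
  rw [← Nat.cast_smul_eq_nsmul (ZMod 2)]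
  split_ifs with h
  · rw [ZMod.natCast_eq_one_iff_odd.2 h, one_smul]
  · rw [ZMod.natCast_eq_zero_iff_even.2 (Nat.not_odd_iff_even.1 h), zero_smul]

lemma eq_of_add_eq_zero_of_charTwo {a b : V} (h : a + b = 0) : a = b := by
  have hb : b + b = 0 := by rw [← two_nsmul, nsmul_eq_ite_odd, if_neg (by decide)]
  rw [← neg_eq_of_add_eq_zero_left h, neg_eq_of_add_eq_zero_left hb]

lemma sum_ne_zero_of_card_eq_two {S : Finset V} (hS : #S = 2) : ∑ v ∈ S, v ≠ 0 := by
  classical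
  obtain ⟨a, b, hab, rfl⟩ := card_eq_two.1 hS
  rw [sum_pair hab]
  exact fun h => hab (eq_of_add_eq_zero_of_charTwo h)

lemma sum_eq_sum_filter_odd_card_fiber {ι : Type*} [Fintype ι] [Fintype V] [DecidableEq V]
    (f : ι → V) : ∑ i, f i = ∑ v with v ≠ 0 ∧ Odd #{i | f i = v}, v := by
  rw [← sum_fiberwise univ f f, sum_filter]
  refine sum_congr rfl fun v _ => ?_
  rw [sum_congr rfl fun i hi => (mem_filter.1 hi).2, sum_const, nsmul_eq_ite_odd]
  by_cases hv : v = 0 <;> simp [hv]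

end CharTwoModule

lemma LinearIndependent.sum_ne_zero {ι R M : Type*} [Ring R] [Nontrivial R] [AddCommGroup M]
    [Module R M] [Fintype ι] [Nonempty ι] {v : ι → M} (hv : LinearIndependent R v) :
    ∑ i, v i ≠ 0 := by
  intro h
  obtain ⟨i⟩ := ‹Nonempty ι›
  exact one_ne_zero (Fintype.linearIndependent_iff.1 hv (fun _ => 1) (by simpa using h) i)

section DotProduct

variable {m : Type*} [Fintype m]

lemma natCast_card_filter_dotProduct_eq_one {ι : Type*} [Fintype ι] (M : ι → m → ZMod 2)
    (u : m → ZMod 2) : (#{i | u ⬝ᵥ M i = 1} : ZMod 2) = u ⬝ᵥ ∑ i, M i := by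
  rw [dotProduct_sum, card_filter]
  push_cast
  refine sum_congr rfl fun i _ => ?_
  generalize u ⬝ᵥ M i = x
  revert x
  decide

variable [DecidableEq m] {s : m → ZMod 2}

/-- Translation by a vector `e` with `e ⬝ᵥ s = 1` swaps the two level sets of `u ↦ u ⬝ᵥ s`. -/
lemma card_filter_dotProduct_eq_one_eq_card_filter_eq_zero (hs : s ≠ 0) :
    #{u | u ⬝ᵥ s = 1} = #{u | u ⬝ᵥ s = 0} := by
  obtain ⟨j, hj⟩ := Function.ne_iff.1 hs
  rw [Pi.zero_apply] at hj
  have hsj : s j = 1 := by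
    revert hj
    generalize s j = x
    revert x
    decide
  refine card_equiv (Equiv.addRight (Pi.single j 1)) fun u => ?_
  simp only [mem_filter_univ, Equiv.coe_addRight, add_dotProduct, single_dotProduct, hsj, one_mul]
  generalize u ⬝ᵥ s = x
  revert x
  decide

lemma two_mul_card_filter_dotProduct_eq_one (hs : s ≠ 0) :
    2 * #{u | u ⬝ᵥ s = 1} = 2 ^ Fintype.card m := by
  have hsplit := card_filter_add_card_filter_not (s := univ) fun u : m → ZMod 2 => u ⬝ᵥ s = 1
  have hne_one : ∀ x : ZMod 2, ¬x = 1 ↔ x = 0 := by decide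
  simp only [hne_one, card_univ, Fintype.card_fun, ZMod.card] at hsplit
  rw [← card_filter_dotProduct_eq_one_eq_card_filter_eq_zero hs] at hsplit
  omega

lemma two_mul_card_filter_ne_zero_dotProduct_eq_one (hs : s ≠ 0) :
    2 * #{u | u ≠ 0 ∧ u ⬝ᵥ s = 1} = 2 ^ Fintype.card m := by
  rw [← two_mul_card_filter_dotProduct_eq_one hs]
  congr 2
  refine filter_congr fun u _ => and_iff_right_of_imp ?_
  rintro h rfl
  simp at h

lemma two_mul_card_filter_ne_zero_dotProduct_eq_zero (hs : s ≠ 0) :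
    2 * (#{u | u ≠ 0 ∧ u ⬝ᵥ s = 0} + 1) = 2 ^ Fintype.card m := by
  have herase : ({u | u ≠ 0 ∧ u ⬝ᵥ s = 0} : Finset (m → ZMod 2)) =
      ({u | u ⬝ᵥ s = 0} : Finset (m → ZMod 2)).erase 0 := by
    ext u
    simp [and_comm]
  rw [herase, card_erase_add_one (by simp),
    ← card_filter_dotProduct_eq_one_eq_card_filter_eq_zero hs, two_mul_card_filter_dotProduct_eq_one hs]

end DotProduct

lemma two_mul_mod_four_eq_two_iff (c : ℕ) : 2 * c % 4 = 2 ↔ (c : ZMod 2) = 1 := by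
  rw [ZMod.natCast_eq_one_iff_odd, Nat.odd_iff]
  omega

lemma four_dvd_two_mul_iff (c : ℕ) : 4 ∣ 2 * c ↔ (c : ZMod 2) = 0 := by
  rw [ZMod.natCast_eq_zero_iff_even, Nat.even_iff]
  omega

theorem stmt19_general (n : ℕ) (M : Fin n → Fin 3 → ZMod 2)
    (odds : Finset (Fin 3 → ZMod 2))
    (hodds : odds = Finset.univ.filter fun v => v ≠ 0 ∧
      Odd (Finset.univ.filter fun i => M i = v).card)
    (hcase : odds.card = 1 ∨ odds.card = 2 ∨
      (odds.card = 3 ∧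
        LinearIndependent (ZMod 2) (fun v : odds => (v : Fin 3 → ZMod 2)))) :
    (Finset.univ.filter fun u : Fin 3 → ZMod 2 => u ≠ 0 ∧
      (2 * (Finset.univ.filter fun i => dotProduct u (M i) = 1).card) % 4 = 2).card
      = 4 ∧
    (Finset.univ.filter fun u : Fin 3 → ZMod 2 => u ≠ 0 ∧
      4 ∣ 2 * (Finset.univ.filter fun i => dotProduct u (M i) = 1).card).card
      = 3 := by
  have hsum : ∑ i, M i = ∑ v ∈ odds, v := hodds ▸ sum_eq_sum_filter_odd_card_fiber M
  have hzero : 0 ∉ odds := by simp [hodds]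
  have hsum_ne_zero : ∑ i, M i ≠ 0 := by
    rw [hsum]
    rcases hcase with h | h | ⟨h, hli⟩
    · obtain ⟨a, rfl⟩ := card_eq_one.1 h
      simpa [eq_comm] using hzero
    · exact sum_ne_zero_of_card_eq_two h
    · have : Nonempty odds := card_pos.1 (by omega) |>.to_subtype
      convert hli.sum_ne_zero using 1
      exact (sum_coe_sort odds _).symm
  simp_rw [two_mul_mod_four_eq_two_iff, four_dvd_two_mul_iff,
    natCast_card_filter_dotProduct_eq_one]
  have h1 := two_mul_card_filter_ne_zero_dotProduct_eq_one hsum_ne_zero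
  have h0 := two_mul_card_filter_ne_zero_dotProduct_eq_zero hsum_ne_zero
  simp only [Fintype.card_fin] at h1 h0
  omega

/-- For a generating list `M` of nonzero vectors of `𝔽₂³` in a generic
case (exactly 1 or 2 vectors of odd multiplicity, or exactly 3 which are linearly
independent), exactly 4 of the 7 nonzero Laplacian eigenvalues
`λ_u = 2·#{i : u·v_i = 1}` are `≡ 2 (mod 4)` and the other 3 are divisible by 4. -/
theorem stmt19 (n : ℕ) (M : Fin n → Fin 3 → ZMod 2)
    (hnz : ∀ i, M i ≠ 0)
    (hgen : Submodule.span (ZMod 2) (Set.range M) = ⊤)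
    (odds : Finset (Fin 3 → ZMod 2))
    (hodds : odds = Finset.univ.filter fun v => v ≠ 0 ∧
      Odd (Finset.univ.filter fun i => M i = v).card)
    (hcase : odds.card = 1 ∨ odds.card = 2 ∨
      (odds.card = 3 ∧
        LinearIndependent (ZMod 2) (fun v : odds => (v : Fin 3 → ZMod 2)))) :
    (Finset.univ.filter fun u : Fin 3 → ZMod 2 => u ≠ 0 ∧
      (2 * (Finset.univ.filter fun i => dotProduct u (M i) = 1).card) % 4 = 2).card
      = 4 ∧
    (Finset.univ.filter fun u : Fin 3 → ZMod 2 => u ≠ 0 ∧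
      4 ∣ 2 * (Finset.univ.filter fun i => dotProduct u (M i) = 1).card).card
      = 3 :=
  stmt19_general n M odds hodds hcase
end
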